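/- Every minimal τ-retentive set of a tournament induces an irreducible subtournament; that is, if R is a minimal τ-retentive set of T, there is no partition of R into nonempty sets A and B with every vertex of A dominating every vertex of B in T. -/

import Mathlib

/-! If `R = A ∪ B` with `A ≻ B`, no vertex of `B` dominates a vertex of `A`, so every in-neighbour
inside `R` of a vertex of `A` lies in `A`. Since `τ` of an in-neighbourhood consists of
in-neighbours, `A` is then itself τ-retentive, and minimality of `R` forces `A = R`, i.e. `B = ∅`. -/

variable {V : Type}

/-- Inneighbors of `v` inside the subtournament on `s` (excluding `v` itself). -/
def inn [DecidableEq V] (r : V → V → Prop) [DecidableRel r] (s : Finset V) (v : V) :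
    Finset V :=
  (s.filter fun u => r u v).erase v

lemma inn_card_lt [DecidableEq V] (r : V → V → Prop) [DecidableRel r]
    (s : Finset V) (v : V) (hv : v ∈ s) : (inn r s v).card < s.card := by
  have h1 : inn r s v ⊆ s.erase v := by
    intro x hx
    rcases Finset.mem_erase.mp hx with ⟨hxv, hx2⟩
    exact Finset.mem_erase.mpr ⟨hxv, (Finset.mem_filter.mp hx2).1⟩
  calc (inn r s v).card ≤ (s.erase v).card := Finset.card_le_card h1
    _ < s.card := Finset.card_erase_lt_of_mem hv

/-- The tournament equilibrium set of the subtournament of `r` on `s`: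
the union of all minimal τ-retentive sets. -/
def tau [DecidableEq V] (r : V → V → Prop) [DecidableRel r] (s : Finset V) : Set V :=
  {x | ∃ A : Finset V, x ∈ A ∧ A ⊆ s ∧ A.Nonempty ∧
    (∀ v, v ∈ s → v ∈ A → ((inn r s v).Nonempty → tau r (inn r s v) ⊆ ↑A)) ∧
    ∀ B : Finset V, B ⊆ s → B ⊂ A →
      ¬ (B.Nonempty ∧
        ∀ v, v ∈ s → v ∈ B → ((inn r s v).Nonempty → tau r (inn r s v) ⊆ ↑B))}
termination_by s.card
decreasing_by
  all_goals exact inn_card_lt r s v (by assumption)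

/-- `A` is a τ-retentive set of the tournament on `s`. -/
def Retentive [DecidableEq V] (r : V → V → Prop) [DecidableRel r] (s A : Finset V) : Prop :=
  A ⊆ s ∧ A.Nonempty ∧ ∀ v ∈ A, (inn r s v).Nonempty → tau r (inn r s v) ⊆ ↑A

/-- `A` is a minimal τ-retentive set of the tournament on `s`. -/
def MinRetentive [DecidableEq V] (r : V → V → Prop) [DecidableRel r] (s A : Finset V) : Prop :=
  Retentive r s A ∧ ∀ B, Retentive r s B → B ⊆ A → B = A

/-- `r` is a tournament on the vertex set `s`. -/
def IsTournament (r : V → V → Prop) (s : Finset V) : Prop :=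
  (∀ v ∈ s, ¬ r v v) ∧ ∀ u ∈ s, ∀ v ∈ s, u ≠ v → (r u v ↔ ¬ r v u)

/-- `u` is the captain of `v` in the subtournament on `s`:
`u` dominates `v` and all other inneighbors of `v`. -/
def IsCaptain (r : V → V → Prop) (s : Finset V) (u v : V) : Prop :=
  u ∈ s ∧ v ∈ s ∧ r u v ∧ ∀ w ∈ s, w ≠ u → r w v → r u w

/-- The (undirected) domination graph of the subtournament on `s`. -/
def domGraph (r : V → V → Prop) (s : Finset V) : SimpleGraph V where
  Adj u v := (IsCaptain r s u v ∨ IsCaptain r s v u) ∧ u ≠ v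
  symm := by
    constructor
    intro u v h
    exact ⟨h.1.symm, h.2.symm⟩
  loopless := by
    constructor
    intro u h
    exact h.2 rfl

theorem IsTournament.asymm {r : V → V → Prop} {s : Finset V} (hT : IsTournament r s)
    {u v : V} (hu : u ∈ s) (hv : v ∈ s) (huv : r u v) : ¬ r v u := by
  rcases eq_or_ne u v with rfl | hne
  · exact hT.1 u hu
  · exact (hT.2 u hu v hv hne).mp huv

section Retentive

variable [DecidableEq V] {r : V → V → Prop} [DecidableRel r] {s : Finset V}

theorem mem_inn {v x : V} : x ∈ inn r s v ↔ x ≠ v ∧ x ∈ s ∧ r x v := by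
  simp [inn]

theorem tau_subset (t : Finset V) : tau r t ⊆ ↑t := by
  intro x hx
  rw [tau] at hx
  obtain ⟨A, hxA, hAt, -⟩ := hx
  exact hAt hxA

theorem Retentive.of_subset_of_closed {R A : Finset V} (hR : Retentive r s R) (hAR : A ⊆ R)
    (hA : A.Nonempty) (hclosed : ∀ v ∈ A, ∀ x ∈ R, r x v → x ∈ A) : Retentive r s A := by
  refine ⟨hAR.trans hR.1, hA, fun v hv hne x hx => ?_⟩
  have hxR : x ∈ R := hR.2.2 v (hAR hv) hne hx
  exact hclosed v hv x hxR (mem_inn.mp (tau_subset _ hx)).2.2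

end Retentive

theorem stmt6 [DecidableEq V] (r : V → V → Prop) [DecidableRel r] (s : Finset V)
    (hT : IsTournament r s) (R : Finset V) (hR : MinRetentive r s R) :
    ¬ ∃ A B : Finset V, A.Nonempty ∧ B.Nonempty ∧ Disjoint A B ∧ A ∪ B = R ∧
      ∀ a ∈ A, ∀ b ∈ B, r a b := by
  rintro ⟨A, B, hA, ⟨b, hb⟩, hdisj, rfl, hdom⟩
  have hs : A ∪ B ⊆ s := hR.1.1
  have hclosed : ∀ v ∈ A, ∀ x ∈ A ∪ B, r x v → x ∈ A := by
    intro v hv x hx hxv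
    refine (Finset.mem_union.mp hx).resolve_right fun hxB => ?_
    exact hT.asymm (hs (Finset.mem_union_left _ hv)) (hs hx) (hdom v hv x hxB) hxv
  have hA_eq : A = A ∪ B :=
    hR.2 A (hR.1.of_subset_of_closed Finset.subset_union_left hA hclosed)
      Finset.subset_union_left
  exact Finset.disjoint_left.mp hdisj (hA_eq ▸ Finset.mem_union_right A hb) hb
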